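/- arXiv:2111.02516 — 4 statements merged into one kernel-verified Lean document; each statement's English description precedes it below -/
import Mathlib

section
/- Let (M, ρ) be a metric space equipped with a measure μ, and let f : X^n → M be a summary with global sensitivity Δ, i.e. ρ(f(D), f(D')) ≤ Δ for all adjacent databases D ~ D'. Suppose for every η ∈ M the normalizing constant C_{η,σ} = ∫_M exp(−ρ(η,m)/σ) dμ(m) is finite and positive for σ = 2Δ/ε. Then the Laplace mechanism that outputs a draw from the density m ↦ C_{f(D),σ}^{-1} exp(−ρ(f(D),m)/σ) with respect to μ satisfies ε-differential privacy: for all adjacent D ~ D' and all measurable A ⊆ M, P(output ∈ A | D) ≤ e^ε · P(output ∈ A | D'). -/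
open MeasureTheory ENNReal

/-! By the triangle inequality, moving the centre of the kernel `exp (-ρ(η, m) / σ)` by at most
`Δ` changes it pointwise by a factor at most `exp (Δ / σ) = exp (ε / 2)`. Integrating this bound
controls the ratio of normalizing constants by the same factor, and the two factors give `exp ε`. -/

theorem ofReal_exp_neg_dist_div_le {M : Type*} [PseudoMetricSpace M] {σ Δ : ℝ} (hσ : 0 ≤ σ)
    {η η' : M} (h : dist η η' ≤ Δ) (m : M) :
    ENNReal.ofReal (Real.exp (-(dist η m) / σ)) ≤
      ENNReal.ofReal (Real.exp (Δ / σ)) * ENNReal.ofReal (Real.exp (-(dist η' m) / σ)) := by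
  rw [← ENNReal.ofReal_mul (Real.exp_nonneg _), ← Real.exp_add, ← add_div]
  gcongr
  linarith [dist_triangle η' η m, dist_comm η η']

theorem ENNReal.inv_le_div_of_le_mul {a b k : ℝ≥0∞} (hk0 : k ≠ 0) (hk : k ≠ ⊤)
    (h : b ≤ k * a) : a⁻¹ ≤ k / b := by
  rw [ENNReal.le_div_iff_mul_le (Or.inr hk0) (Or.inr hk), mul_comm, ← div_eq_mul_inv]
  exact ENNReal.div_le_of_le_mul h

theorem setLIntegral_div_lintegral_le {α : Type*} [MeasurableSpace α] {μ : Measure α} {f g : α → ℝ≥0∞} {k : ℝ≥0∞} (hk : k ≠ ⊤)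
    (hfg : ∀ x, f x ≤ k * g x) (hgf : ∀ x, g x ≤ k * f x) (hf0 : ∫⁻ x, f x ∂μ ≠ 0)
    (s : Set α) :
    ∫⁻ x in s, f x / ∫⁻ y, f y ∂μ ∂μ ≤ k * k * ∫⁻ x in s, g x / ∫⁻ y, g y ∂μ ∂μ := by
  have hk0 : k ≠ 0 := by
    rintro rfl
    exact hf0 (lintegral_eq_zero_of_ae_eq_zero (.of_forall fun x => by simpa using hfg x))
  have hnorm : ∫⁻ y, g y ∂μ ≤ k * ∫⁻ y, f y ∂μ := by
    rw [← lintegral_const_mul' _ _ hk]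
    exact lintegral_mono hgf
  rw [← lintegral_const_mul' _ _ (ENNReal.mul_ne_top hk hk)]
  refine lintegral_mono fun x => ?_
  calc f x / ∫⁻ y, f y ∂μ ≤ k * g x * (k / ∫⁻ y, g y ∂μ) := by
        rw [div_eq_mul_inv]
        gcongr
        exacts [hfg x, ENNReal.inv_le_div_of_le_mul hk0 hk hnorm]
    _ = k * k * (g x / ∫⁻ y, g y ∂μ) := by
        rw [div_eq_mul_inv, div_eq_mul_inv]; ring

theorem laplace_mechanism_dp_general
    {X M : Type*} [MetricSpace M] [MeasurableSpace M]
    (μ : Measure M) {n : ℕ} (f : (Fin n → X) → M) (Δ ε : ℝ)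
    (hΔ : 0 < Δ) (hε : 0 < ε)
    (hsens : ∀ D D' : Fin n → X, (∃ i, ∀ j, j ≠ i → D j = D' j) →
      dist (f D) (f D') ≤ Δ)
    (C : M → ℝ≥0∞)
    (hC : ∀ η, C η = ∫⁻ m, ENNReal.ofReal (Real.exp (-(dist η m) / (2 * Δ / ε))) ∂μ)
    (hCpos : ∀ η, 0 < C η) :
    ∀ D D' : Fin n → X, (∃ i, ∀ j, j ≠ i → D j = D' j) →
      ∀ A : Set M, MeasurableSet A →
        ∫⁻ m in A, ENNReal.ofReal (Real.exp (-(dist (f D) m) / (2 * Δ / ε))) /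
            C (f D) ∂μ ≤
          ENNReal.ofReal (Real.exp ε) *
            ∫⁻ m in A, ENNReal.ofReal (Real.exp (-(dist (f D') m) / (2 * Δ / ε))) /
              C (f D') ∂μ := by
  intro D D' hadj A _
  have hσ : 0 ≤ 2 * Δ / ε := by positivity
  have hshift : Δ / (2 * Δ / ε) = ε / 2 := by field_simp
  have hsquare : ENNReal.ofReal (Real.exp (ε / 2)) * ENNReal.ofReal (Real.exp (ε / 2)) =
      ENNReal.ofReal (Real.exp ε) := by
    rw [← ENNReal.ofReal_mul (Real.exp_nonneg _), ← Real.exp_add, add_halves]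
  have hdist : dist (f D) (f D') ≤ Δ := hsens D D' hadj
  rw [← hsquare, hC, hC]
  refine setLIntegral_div_lintegral_le ofReal_ne_top (fun m => ?_) (fun m => ?_)
    (hC (f D) ▸ (hCpos (f D)).ne') A
  · exact hshift ▸ ofReal_exp_neg_dist_div_le hσ hdist m
  · exact hshift ▸ ofReal_exp_neg_dist_div_le hσ (dist_comm (f D) (f D') ▸ hdist) m

theorem laplace_mechanism_dp
    {X M : Type*} [MetricSpace M] [MeasurableSpace M]
    (μ : Measure M) {n : ℕ} (f : (Fin n → X) → M) (Δ ε : ℝ)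
    (hΔ : 0 < Δ) (hε : 0 < ε)
    (hsens : ∀ D D' : Fin n → X, (∃ i, ∀ j, j ≠ i → D j = D' j) →
      dist (f D) (f D') ≤ Δ)
    (C : M → ℝ≥0∞)
    (hC : ∀ η, C η = ∫⁻ m, ENNReal.ofReal (Real.exp (-(dist η m) / (2 * Δ / ε))) ∂μ)
    (hCpos : ∀ η, 0 < C η) (hCfin : ∀ η, C η < ⊤) :
    ∀ D D' : Fin n → X, (∃ i, ∀ j, j ≠ i → D j = D' j) →
      ∀ A : Set M, MeasurableSet A →
        ∫⁻ m in A, ENNReal.ofReal (Real.exp (-(dist (f D) m) / (2 * Δ / ε))) /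
            C (f D) ∂μ ≤
          ENNReal.ofReal (Real.exp ε) *
            ∫⁻ m in A, ENNReal.ofReal (Real.exp (-(dist (f D') m) / (2 * Δ / ε))) /
              C (f D') ∂μ :=
  laplace_mechanism_dp_general μ f Δ ε hΔ hε hsens C hC hCpos
end

section
/- For all real u₁, u₂ ≥ 0, (e^{√(u₁² + u₂²)} − 1)² ≥ (e^{u₁} − 1)² + (e^{u₂} − 1)². -/
lemma exp_slope_aux {x r : ℝ} (hx : 0 ≤ x) (hxr : x ≤ r) :
    Real.exp x - 1 ≤ (x / r) * (Real.exp r - 1) := by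
  rcases eq_or_lt_of_le (hx.trans hxr) with hr | hr
  · have hx0 : x = 0 := le_antisymm (hxr.trans hr.symm.le) hx
    simp [hx0, ← hr]
  · set t : ℝ := x / r with ht
    have ht0 : 0 ≤ t := div_nonneg hx hr.le
    have ht1 : t ≤ 1 := (div_le_one hr).2 hxr
    have key := convexOn_exp.2 (Set.mem_univ 0) (Set.mem_univ r)
      (by linarith : (0:ℝ) ≤ 1 - t) ht0 (by ring)
    simp only [smul_eq_mul, mul_zero, zero_add, Real.exp_zero, mul_one] at key
    have hxt : t * r = x := div_mul_cancel₀ x hr.ne'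
    rw [hxt] at key
    nlinarith [key]

theorem exp_sq_superadditive (u₁ u₂ : ℝ) (h₁ : 0 ≤ u₁) (h₂ : 0 ≤ u₂) :
    (Real.exp u₁ - 1) ^ 2 + (Real.exp u₂ - 1) ^ 2 ≤
      (Real.exp (Real.sqrt (u₁ ^ 2 + u₂ ^ 2)) - 1) ^ 2 := by
  set r := Real.sqrt (u₁ ^ 2 + u₂ ^ 2) with hrdef
  have hr0 : 0 ≤ r := Real.sqrt_nonneg _
  have hr2 : r ^ 2 = u₁ ^ 2 + u₂ ^ 2 := Real.sq_sqrt (by positivity)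
  have h1r : u₁ ≤ r := by
    rw [hrdef, Real.le_sqrt h₁] <;> nlinarith [sq_nonneg u₁, sq_nonneg u₂]
  have h2r : u₂ ≤ r := by
    rw [hrdef, Real.le_sqrt h₂] <;> nlinarith [sq_nonneg u₁, sq_nonneg u₂]
  rcases eq_or_lt_of_le hr0 with hr | hr
  · have hu1 : u₁ = 0 := le_antisymm (h1r.trans hr.symm.le) h₁
    have hu2 : u₂ = 0 := le_antisymm (h2r.trans hr.symm.le) h₂
    simp [hu1, hu2, ← hr]
  · have e1 := exp_slope_aux h₁ h1r
    have e2 := exp_slope_aux h₂ h2r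
    have n1 : 0 ≤ Real.exp u₁ - 1 := by nlinarith [Real.one_le_exp h₁]
    have n2 : 0 ≤ Real.exp u₂ - 1 := by nlinarith [Real.one_le_exp h₂]
    have nr : 0 ≤ Real.exp r - 1 := by nlinarith [Real.one_le_exp hr0]
    have s1 : (Real.exp u₁ - 1) ^ 2 ≤ (u₁ / r) ^ 2 * (Real.exp r - 1) ^ 2 := by
      have := mul_self_le_mul_self n1 e1
      nlinarith [this]
    have s2 : (Real.exp u₂ - 1) ^ 2 ≤ (u₂ / r) ^ 2 * (Real.exp r - 1) ^ 2 := by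
      have := mul_self_le_mul_self n2 e2
      nlinarith [this]
    have hsum : (u₁ / r) ^ 2 + (u₂ / r) ^ 2 = 1 := by
      field_simp
      linarith [hr2]
    nlinarith [s1, s2, hsum, sq_nonneg (Real.exp r - 1)]
end

section
/- Fix r > 0 and k ≥ 1. Over all vectors (λ₁, …, λ_k) of positive reals satisfying Σ_{i=1}^k (log λ_i)² ≤ r², the supremum of Σ_{i=1}^k (λ_i − 1)² equals (e^r − 1)². -/
lemma aux_slope (r t : ℝ) (hr : 0 < r) (ht : 0 ≤ t) (htr : t ≤ r) :
    Real.exp t - 1 ≤ t / r * (Real.exp r - 1) := by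
  have hb : 0 ≤ t / r := div_nonneg ht hr.le
  have ha : 0 ≤ 1 - t / r := by
    have : t / r ≤ 1 := (div_le_one hr).mpr htr
    linarith
  have hab : (1 - t / r) + t / r = 1 := by ring
  have h := convexOn_exp.2 (Set.mem_univ (0:ℝ)) (Set.mem_univ r) ha hb hab
  simp only [smul_eq_mul, mul_zero, zero_add, Real.exp_zero] at h
  have hrt : t / r * r = t := div_mul_cancel₀ t hr.ne'
  rw [hrt] at h
  nlinarith [h]

lemma aux_abs (l : ℝ) (hl : 0 < l) : |l - 1| ≤ Real.exp |Real.log l| - 1 := by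
  rcases le_or_gt 1 l with h | h
  · have hlog : 0 ≤ Real.log l := Real.log_nonneg h
    rw [abs_of_nonneg hlog, Real.exp_log hl, abs_of_nonneg (by linarith)]
  · have hlog : Real.log l < 0 := Real.log_neg hl h
    rw [abs_of_neg hlog, abs_of_neg (by linarith), Real.exp_neg, Real.exp_log hl]
    have hinv : l * l⁻¹ = 1 := mul_inv_cancel₀ hl.ne'
    nlinarith [sq_nonneg (1 - l)]

theorem spd_euclidean_radius (r : ℝ) (hr : 0 < r) (k : ℕ) (hk : 1 ≤ k) :
    sSup {s : ℝ | ∃ lam : Fin k → ℝ, (∀ i, 0 < lam i) ∧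
        (∑ i, Real.log (lam i) ^ 2 ≤ r ^ 2) ∧ s = ∑ i, (lam i - 1) ^ 2} =
      (Real.exp r - 1) ^ 2 := by
  set E := Real.exp r - 1 with hE
  have hEpos : 0 < E := by
    nlinarith [Real.add_one_le_exp r]
  -- upper bound for all members
  have hub : ∀ x ∈ {s : ℝ | ∃ lam : Fin k → ℝ, (∀ i, 0 < lam i) ∧
      (∑ i, Real.log (lam i) ^ 2 ≤ r ^ 2) ∧ s = ∑ i, (lam i - 1) ^ 2}, x ≤ E ^ 2 := by
    rintro x ⟨lam, hpos, hsum, rfl⟩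
    have hterm : ∀ i, (lam i - 1) ^ 2 ≤ Real.log (lam i) ^ 2 * (E ^ 2 / r ^ 2) := by
      intro i
      set t := |Real.log (lam i)| with htdef
      have ht0 : 0 ≤ t := abs_nonneg _
      have htsq : t ^ 2 = Real.log (lam i) ^ 2 := sq_abs _
      have hle : t ^ 2 ≤ r ^ 2 := by
        rw [htsq]
        calc Real.log (lam i) ^ 2 ≤ ∑ j, Real.log (lam j) ^ 2 :=
              Finset.single_le_sum (f := fun j => Real.log (lam j) ^ 2) (fun j _ => sq_nonneg _) (Finset.mem_univ i)
          _ ≤ r ^ 2 := hsum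
      have htr : t ≤ r := by nlinarith
      have h1 : |lam i - 1| ≤ Real.exp t - 1 := aux_abs (lam i) (hpos i)
      have h2 : Real.exp t - 1 ≤ t / r * E := aux_slope r t hr ht0 htr
      have h3 : |lam i - 1| ≤ t / r * E := h1.trans h2
      have h4 : (lam i - 1) ^ 2 ≤ (t / r * E) ^ 2 := by
        rw [← sq_abs (lam i - 1)]
        exact pow_le_pow_left₀ (abs_nonneg _) h3 2
      calc (lam i - 1) ^ 2 ≤ (t / r * E) ^ 2 := h4
        _ = t ^ 2 * (E ^ 2 / r ^ 2) := by field_simp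
        _ = Real.log (lam i) ^ 2 * (E ^ 2 / r ^ 2) := by rw [htsq]
    calc ∑ i, (lam i - 1) ^ 2 ≤ ∑ i, Real.log (lam i) ^ 2 * (E ^ 2 / r ^ 2) :=
          Finset.sum_le_sum (fun i _ => hterm i)
      _ = (∑ i, Real.log (lam i) ^ 2) * (E ^ 2 / r ^ 2) := by rw [Finset.sum_mul]
      _ ≤ r ^ 2 * (E ^ 2 / r ^ 2) := by
          apply mul_le_mul_of_nonneg_right hsum
          positivity
      _ = E ^ 2 := by field_simp
  -- the witness
  set i0 : Fin k := ⟨0, hk⟩ with hi0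
  set lam : Fin k → ℝ := fun i => if i = i0 then Real.exp r else 1 with hlam
  have hgen : ∀ f : ℝ → ℝ, f 1 = 0 → ∑ i, f (lam i) = f (Real.exp r) := by
    intro f hf
    rw [Finset.sum_eq_single i0]
    · simp [hlam]
    · intro i _ hi
      simp [hlam, hi, hf]
    · intro h
      exact absurd (Finset.mem_univ i0) h
  have hmem : E ^ 2 ∈ {s : ℝ | ∃ lam : Fin k → ℝ, (∀ i, 0 < lam i) ∧
      (∑ i, Real.log (lam i) ^ 2 ≤ r ^ 2) ∧ s = ∑ i, (lam i - 1) ^ 2} := by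
    refine ⟨lam, ?_, ?_, ?_⟩
    · intro i
      simp only [hlam]
      split
      · exact Real.exp_pos r
      · exact one_pos
    · have := hgen (fun x => Real.log x ^ 2) (by simp)
      rw [this, Real.log_exp]
    · have := hgen (fun x => (x - 1) ^ 2) (by simp)
      rw [this]
  apply le_antisymm
  · exact Real.sSup_le hub (by positivity)
  · exact le_csSup ⟨E ^ 2, hub⟩ hmem
end

section
/- Let σ > 0, d ≥ 1, and let A_{r/σ} ⊂ ℝ^d be the Euclidean ball of radius r/σ centered at the origin. Then the ratio ( ∫_{A_{r/σ}} ‖u‖² e^{−‖u‖} du ) / ( ∫_{A_{r/σ}} e^{−‖u‖} du ) is at most ( ∫_{ℝ^d} ‖u‖² e^{−‖u‖} du ) / ( ∫_{ℝ^d} e^{−‖u‖} du ) = d(d+1). In particular the conditional second moment of the Euclidean Laplace restricted to any centered ball is bounded by d(d+1). -/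
/-!
On the ball `‖u‖ < R` the weight `‖u‖²` is at most `R²`, and off it at least `R²`; so discarding
the mass outside the ball can only lower the `e^{-‖u‖}`-weighted average of `‖u‖²`.
In polar coordinates `∫ ‖u‖^k e^{-‖u‖} du = d · vol(B(0,1)) · Γ(d + k)`, hence the unrestricted
average is `Γ(d + 2) / Γ(d) = d (d + 1)`.
-/

open MeasureTheory Metric Set Module Real

theorem setIntegral_div_setIntegral_le_integral_div_integral {X : Type*} [MeasurableSpace X]
    {μ : Measure X} {f g : X → ℝ} {s : Set X} {c : ℝ} (hs : MeasurableSet s)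
    (hf : Integrable f μ) (hg : Integrable g μ) (hf0 : 0 ≤ f) (hg0 : 0 ≤ g)
    (h_in : ∀ x ∈ s, f x ≤ c * g x) (h_out : ∀ x ∈ sᶜ, c * g x ≤ f x) :
    (∫ x in s, f x ∂μ) / (∫ x in s, g x ∂μ) ≤ (∫ x, f x ∂μ) / ∫ x, g x ∂μ := by
  have hfs : ∫ x in s, f x ∂μ ≤ c * ∫ x in s, g x ∂μ := by
    rw [← integral_const_mul]
    exact setIntegral_mono_on hf.integrableOn (hg.integrableOn.const_mul c) hs h_in
  have hfsc : c * ∫ x in sᶜ, g x ∂μ ≤ ∫ x in sᶜ, f x ∂μ := by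
    rw [← integral_const_mul]
    exact setIntegral_mono_on (hg.integrableOn.const_mul c) hf.integrableOn hs.compl h_out
  have hgsc : 0 ≤ ∫ x in sᶜ, g x ∂μ := integral_nonneg hg0
  rcases (integral_nonneg hg0 : 0 ≤ ∫ x in s, g x ∂μ).eq_or_lt with hgs | hgs
  · rw [← hgs, div_zero]
    exact div_nonneg (integral_nonneg hf0) (integral_nonneg hg0)
  rw [← integral_add_compl hs hf, ← integral_add_compl hs hg, div_le_div_iff₀ hgs (by linarith)]
  nlinarith

theorem pow_smul_pow_mul_exp_neg {n : ℕ} (hn : n ≠ 0) (k : ℕ) (y : ℝ) :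
    y ^ (n - 1) • (y ^ k * exp (-y)) = exp (-y) * y ^ ((n + k : ℝ) - 1) := by
  have : (n + k : ℝ) - 1 = ((n - 1 + k : ℕ) : ℝ) := by
    rw [Nat.cast_add, Nat.cast_sub (Nat.one_le_iff_ne_zero.mpr hn)]
    push_cast
    ring
  rw [this, rpow_natCast, pow_add, smul_eq_mul]
  ring

section

variable {E : Type*} [NormedAddCommGroup E] [NormedSpace ℝ E] [FiniteDimensional ℝ E]
  [MeasurableSpace E] [BorelSpace E] [Nontrivial E] (μ : Measure E) [μ.IsAddHaarMeasure]

theorem integrable_norm_pow_mul_exp_neg_norm (k : ℕ) :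
    Integrable (fun x => ‖x‖ ^ k * exp (-‖x‖)) μ := by
  have hn : 0 < finrank ℝ E := finrank_pos
  rw [integrable_fun_norm_addHaar μ (f := fun y => y ^ k * exp (-y)),
    funext (pow_smul_pow_mul_exp_neg hn.ne' k)]
  exact GammaIntegral_convergent (by positivity)

theorem integral_norm_pow_mul_exp_neg_norm (k : ℕ) :
    ∫ x, ‖x‖ ^ k * exp (-‖x‖) ∂μ =
      finrank ℝ E * μ.real (ball 0 1) * Gamma (finrank ℝ E + k) := by
  have hn : 0 < finrank ℝ E := finrank_pos
  rw [integral_fun_norm_addHaar μ (fun y => y ^ k * exp (-y)),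
    funext (pow_smul_pow_mul_exp_neg hn.ne' k), ← Gamma_eq_integral (by positivity),
    nsmul_eq_mul, smul_eq_mul, mul_assoc]

theorem integral_norm_sq_mul_exp_neg_norm_div_integral_exp_neg_norm :
    (∫ x, ‖x‖ ^ 2 * exp (-‖x‖) ∂μ) / (∫ x, exp (-‖x‖) ∂μ) =
      finrank ℝ E * (finrank ℝ E + 1) := by
  have h0 := integral_norm_pow_mul_exp_neg_norm μ 0
  simp only [pow_zero, one_mul, Nat.cast_zero, add_zero] at h0
  have hn : (0 : ℝ) < finrank ℝ E := by exact_mod_cast finrank_pos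
  have hball : 0 < μ.real (ball 0 1) :=
    ENNReal.toReal_pos (measure_ball_pos μ 0 one_pos).ne' measure_ball_lt_top.ne
  have hΓ : Gamma (finrank ℝ E + (2 : ℕ)) =
      (finrank ℝ E + 1) * finrank ℝ E * Gamma (finrank ℝ E) := by
    rw [Nat.cast_two, show (finrank ℝ E : ℝ) + 2 = finrank ℝ E + 1 + 1 by ring,
      Gamma_add_one (by positivity), Gamma_add_one hn.ne', mul_assoc]
  rw [integral_norm_pow_mul_exp_neg_norm μ 2, h0, hΓ]
  have := Gamma_pos_of_pos hn
  field_simp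

end

theorem laplace_conditional_second_moment_bound
    (σ r : ℝ) (hσ : 0 < σ) (hr : 0 < r) (d : ℕ) (hd : 1 ≤ d) :
    (∫ u in Metric.ball (0 : EuclideanSpace ℝ (Fin d)) (r / σ),
          ‖u‖ ^ 2 * Real.exp (-‖u‖)) /
        (∫ u in Metric.ball (0 : EuclideanSpace ℝ (Fin d)) (r / σ),
          Real.exp (-‖u‖)) ≤
      (∫ u : EuclideanSpace ℝ (Fin d), ‖u‖ ^ 2 * Real.exp (-‖u‖)) /
        (∫ u : EuclideanSpace ℝ (Fin d), Real.exp (-‖u‖)) ∧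
    (∫ u : EuclideanSpace ℝ (Fin d), ‖u‖ ^ 2 * Real.exp (-‖u‖)) /
        (∫ u : EuclideanSpace ℝ (Fin d), Real.exp (-‖u‖)) = d * (d + 1) := by
  have : Nontrivial (EuclideanSpace ℝ (Fin d)) :=
    have : Nonempty (Fin d) := Fin.pos_iff_nonempty.mp hd
    inferInstance
  have hR : 0 ≤ r / σ := div_nonneg hr.le hσ.le
  refine ⟨setIntegral_div_setIntegral_le_integral_div_integral (c := (r / σ) ^ 2)
    measurableSet_ball (integrable_norm_pow_mul_exp_neg_norm volume 2)
    (by simpa using integrable_norm_pow_mul_exp_neg_norm volume 0)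
    (fun x => by positivity) (fun x => by positivity) (fun x hx => ?_) (fun x hx => ?_), ?_⟩
  · rw [mem_ball_zero_iff] at hx
    gcongr
  · rw [mem_compl_iff, mem_ball_zero_iff, not_lt] at hx
    gcongr
  · simpa using integral_norm_sq_mul_exp_neg_norm_div_integral_exp_neg_norm
      (volume : Measure (EuclideanSpace ℝ (Fin d)))
end
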